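/- Let (g,J) be a Lie algebra with almost complex structure, (E,I) with complex structure, ρ a representation, and N(x) = [I,ρ(Jx)] + I[ρ(x),I]. Then the Nijenhuis tensor of K = I × J on the semidirect product E ⋊ g satisfies N_K((v,x),(w,y)) = (N(x)w − N(y)v, N_J(x,y)) for all v,w ∈ E, x,y ∈ g, where N_J is the Nijenhuis tensor of J on g. -/

import Mathlib

attribute [local instance 100] LieRing.ofAssociativeRing

/-- The bracket of the semidirect product Lie algebra `E ⋊ g` attached to a
representation `ρ : g → End(E)` (with `E` abelian):
`[(v,x),(w,y)] = (ρ(x)w − ρ(y)v, [x,y])`. -/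
def sdBracket {g E : Type} [LieRing g] [LieAlgebra ℝ g]
    [AddCommGroup E] [Module ℝ E] (ρ : g →ₗ⁅ℝ⁆ Module.End ℝ E) :
    E × g → E × g → E × g :=
  fun a b => (ρ a.2 b.1 - ρ b.2 a.1, ⁅a.2, b.2⁆)

/-- Nijenhuis tensor of an endomorphism `K` with respect to a bracket `br`. -/
def nijOf {X : Type} [AddCommGroup X] (br : X → X → X) (K : X → X) :
    X → X → X :=
  fun a b => br a b - br (K a) (K b) + K (br (K a) b) + K (br a (K b))

/- The `E`-part of `N_K((v,x),(w,y))` is linear in `w` and `v` separately; `I² = -1` identifies the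
coefficient of `w`, namely `ρ(x) - ρ(Jx) I + I ρ(Jx) + I ρ(x) I`, with `N(x)`. -/

theorem lie_add_mul_lie_eq {R : Type*} [Ring R] {i : R} (hi : i * i = -1) (a b : R) :
    ⁅i, b⁆ + i * ⁅a, i⁆ = a - b * i + i * b + i * a * i := by
  rw [Ring.lie_def, Ring.lie_def, mul_sub, ← mul_assoc i i a, hi]
  noncomm_ring

theorem nijOf_sdBracket_fst {g E : Type} [LieRing g] [LieAlgebra ℝ g]
    [AddCommGroup E] [Module ℝ E] (ρ : g →ₗ⁅ℝ⁆ Module.End ℝ E) (I : Module.End ℝ E)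
    (J : g → g) (v w : E) (x y : g) :
    (nijOf (sdBracket ρ) (fun c => (I c.1, J c.2)) (v, x) (w, y)).1 =
      (ρ x - ρ (J x) * I + I * ρ (J x) + I * ρ x * I) w -
        (ρ y - ρ (J y) * I + I * ρ (J y) + I * ρ y * I) v := by
  simp only [nijOf, sdBracket, Prod.fst_add, Prod.fst_sub, map_sub, LinearMap.add_apply,
    LinearMap.sub_apply, Module.End.mul_apply]
  abel

theorem semidirect_nijenhuis_formula_general
    (g E : Type) [LieRing g] [LieAlgebra ℝ g]
    [AddCommGroup E] [Module ℝ E]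
    (J : g →ₗ[ℝ] g)
    (I : Module.End ℝ E) (hI : ∀ v : E, I (I v) = -v)
    (ρ : g →ₗ⁅ℝ⁆ Module.End ℝ E) :
    ∀ (v w : E) (x y : g),
      nijOf (sdBracket ρ) (fun c => (I c.1, J c.2)) (v, x) (w, y) =
        ((⁅I, ρ (J x)⁆ + I * ⁅ρ x, I⁆) w - (⁅I, ρ (J y)⁆ + I * ⁅ρ y, I⁆) v,
          ⁅x, y⁆ - ⁅J x, J y⁆ + J ⁅J x, y⁆ + J ⁅x, J y⁆) := by
  intro v w x y
  have hII : I * I = -1 := LinearMap.ext hI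
  refine Prod.ext ?_ rfl
  rw [nijOf_sdBracket_fst, lie_add_mul_lie_eq hII, lie_add_mul_lie_eq hII]

/-- With `N(x) = [I, ρ(Jx)] + I∘[ρ(x), I] ∈ End(E)`, the Nijenhuis
tensor of `K = I × J` on the semidirect product `E ⋊ g` satisfies
`N_K((v,x),(w,y)) = (N(x)w − N(y)v, N_J(x,y))`, where `N_J` is the Nijenhuis
tensor of `J` on `g`. -/
theorem semidirect_nijenhuis_formula
    (g E : Type) [LieRing g] [LieAlgebra ℝ g]
    [AddCommGroup E] [Module ℝ E]
    (J : g →ₗ[ℝ] g) (hJ : ∀ x : g, J (J x) = -x)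
    (I : Module.End ℝ E) (hI : ∀ v : E, I (I v) = -v)
    (ρ : g →ₗ⁅ℝ⁆ Module.End ℝ E) :
    ∀ (v w : E) (x y : g),
      nijOf (sdBracket ρ) (fun c => (I c.1, J c.2)) (v, x) (w, y) =
        ((⁅I, ρ (J x)⁆ + I * ⁅ρ x, I⁆) w - (⁅I, ρ (J y)⁆ + I * ⁅ρ y, I⁆) v,
          ⁅x, y⁆ - ⁅J x, J y⁆ + J ⁅J x, y⁆ + J ⁅x, J y⁆) :=
  semidirect_nijenhuis_formula_general g E J I hI ρ
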